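/- arXiv:1501.06391 — 4 statements merged into one kernel-verified Lean document; each statement's English description precedes it below -/
import Mathlib

section
/- Let α_1, …, α_d be positive natural numbers with n = α_1 + ⋯ + α_d. Then for every p ∈ [1,∞) and every bounded real sequence x, ‖x‖_{∞,p,n}^p ≤ ∑_{l=1}^{d} (α_l / n) ‖x‖_{∞,p,α_l}^p. -/
/-!
A window of length `n = α₁ + ⋯ + α_d` splits into `d` consecutive windows of lengths `α_l`.
The `p`-th power sum over the window of length `α_l` is at most `α_l ‖x‖_{∞,p,α_l}^p`, so the
`p`-th power sum over the long window is at most `∑ α_l ‖x‖_{∞,p,α_l}^p`; dividing by `n` and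
taking the supremum over the starting point gives the claim.
-/

open Finset

noncomputable def discNorm (x : ℕ → ℝ) (p : ℝ) (n : ℕ) : ℝ :=
  ⨆ j : ℕ, ((1 / (n : ℝ)) * ∑ i ∈ Finset.range n, |x (j + i)| ^ p) ^ (1 / p)

theorem sum_range_sum_le_of_forall_sum_range_le {M : Type*} [AddCommMonoid M] [PartialOrder M]
    [IsOrderedAddMonoid M] {f : ℕ → M} {B : ℕ → M}
    (hB : ∀ m j, ∑ i ∈ range m, f (j + i) ≤ B m) {d : ℕ} (α : Fin d → ℕ) (j : ℕ) :
    ∑ i ∈ range (∑ l, α l), f (j + i) ≤ ∑ l, B (α l) := by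
  induction d generalizing j with
  | zero => simp
  | succ d ih =>
    rw [Fin.sum_univ_succ, sum_range_add, Fin.sum_univ_succ]
    simp_rw [← add_assoc]
    exact add_le_add (hB _ j) (ih (fun l => α l.succ) (j + α 0))

noncomputable def windowMean (x : ℕ → ℝ) (p : ℝ) (m j : ℕ) : ℝ :=
  (1 / (m : ℝ)) * ∑ i ∈ range m, |x (j + i)| ^ p

theorem discNorm_eq_iSup_windowMean (x : ℕ → ℝ) (p : ℝ) (m : ℕ) :
    discNorm x p m = ⨆ j, windowMean x p m j ^ (1 / p) :=
  rfl

theorem windowMean_nonneg (x : ℕ → ℝ) (p : ℝ) (m j : ℕ) : 0 ≤ windowMean x p m j := by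
  unfold windowMean
  positivity

theorem discNorm_nonneg (x : ℕ → ℝ) (p : ℝ) (m : ℕ) : 0 ≤ discNorm x p m :=
  Real.iSup_nonneg fun j => Real.rpow_nonneg (windowMean_nonneg x p m j) _

section

variable {x : ℕ → ℝ} {p : ℝ}

theorem bddAbove_range_windowMean_rpow {C : ℝ} (hC : ∀ i, |x i| ≤ C) (hp : 0 < p) (m : ℕ) :
    BddAbove (Set.range fun j => windowMean x p m j ^ (1 / p)) := by
  refine ⟨((1 / (m : ℝ)) * ∑ _i ∈ range m, C ^ p) ^ (1 / p), ?_⟩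
  rintro _ ⟨j, rfl⟩
  refine Real.rpow_le_rpow (windowMean_nonneg x p m j) ?_ (by positivity)
  unfold windowMean
  gcongr with i
  exact hC _

theorem windowMean_le_discNorm_rpow {C : ℝ} (hC : ∀ i, |x i| ≤ C) (hp : 0 < p) (m j : ℕ) :
    windowMean x p m j ≤ discNorm x p m ^ p := by
  rw [← Real.rpow_inv_le_iff_of_pos (windowMean_nonneg x p m j) (discNorm_nonneg x p m) hp,
    ← one_div]
  exact le_ciSup (bddAbove_range_windowMean_rpow hC hp m) j

theorem sum_range_rpow_le_mul_discNorm_rpow {C : ℝ} (hC : ∀ i, |x i| ≤ C) (hp : 0 < p)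
    (m j : ℕ) : ∑ i ∈ range m, |x (j + i)| ^ p ≤ m * discNorm x p m ^ p := by
  rcases Nat.eq_zero_or_pos m with rfl | hm
  · simp
  calc ∑ i ∈ range m, |x (j + i)| ^ p = m * windowMean x p m j := by
        unfold windowMean
        field_simp
    _ ≤ m * discNorm x p m ^ p := by gcongr; exact windowMean_le_discNorm_rpow hC hp m j

theorem discNorm_rpow_le_of_forall_windowMean_le {B : ℝ} (hp : 0 < p) {m : ℕ}
    (hB : ∀ j, windowMean x p m j ≤ B) : discNorm x p m ^ p ≤ B := by
  have hB0 : 0 ≤ B := (windowMean_nonneg x p m 0).trans (hB 0)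
  rw [← Real.le_rpow_inv_iff_of_pos (discNorm_nonneg x p m) hB0 hp, discNorm_eq_iSup_windowMean]
  refine ciSup_le fun j => ?_
  rw [one_div]
  exact Real.rpow_le_rpow (windowMean_nonneg x p m j) (hB j) (inv_nonneg.mpr hp.le)

end

theorem stmt2_general (d : ℕ) (α : Fin d → ℕ)
    (n : ℕ) (hn : n = ∑ l, α l) (p : ℝ) (hp : 1 ≤ p)
    (x : ℕ → ℝ) (hx : ∃ C, ∀ i, |x i| ≤ C) :
    discNorm x p n ^ p ≤ ∑ l, ((α l : ℝ) / (n : ℝ)) * discNorm x p (α l) ^ p := by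
  obtain ⟨C, hC⟩ := hx
  have hp0 : 0 < p := zero_lt_one.trans_le hp
  refine discNorm_rpow_le_of_forall_windowMean_le hp0 fun j => ?_
  have hsplit : ∑ i ∈ range n, |x (j + i)| ^ p ≤ ∑ l, (α l : ℝ) * discNorm x p (α l) ^ p := by
    subst hn
    exact sum_range_sum_le_of_forall_sum_range_le (f := fun i => |x i| ^ p)
      (B := fun m => m * discNorm x p m ^ p) (sum_range_rpow_le_mul_discNorm_rpow hC hp0) α j
  calc windowMean x p n j ≤ (1 / (n : ℝ)) * ∑ l, (α l : ℝ) * discNorm x p (α l) ^ p := by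
        unfold windowMean
        gcongr
    _ = ∑ l, ((α l : ℝ) / (n : ℝ)) * discNorm x p (α l) ^ p := by
        rw [mul_sum]
        exact sum_congr rfl fun l _ => by ring

theorem stmt2 (d : ℕ) (hd : 1 ≤ d) (α : Fin d → ℕ) (hα : ∀ l, 1 ≤ α l)
    (n : ℕ) (hn : n = ∑ l, α l) (p : ℝ) (hp : 1 ≤ p)
    (x : ℕ → ℝ) (hx : ∃ C, ∀ i, |x i| ≤ C) :
    discNorm x p n ^ p ≤ ∑ l, ((α l : ℝ) / (n : ℝ)) * discNorm x p (α l) ^ p :=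
  stmt2_general d α n hn p hp x hx
end

section
/- Let N = 1, p ∈ [1,∞), and T, S > 0 with T < S and S/T ∉ ℕ. Then there exist measurable functions f, g : ℝ → ℝ with finite norms such that ‖f‖_{p,T} < ‖f‖_{p,S} and ‖g‖_{p,S} < ‖g‖_{p,T}, where ‖h‖_{p,L} = sup over open intervals I of length L of ((1/L) ∫_I |h|^p)^{1/p}. -/
/-!
Both functions are indicators `1_E`, for which `‖1_E‖_{p,L}^p = sup_a |E ∩ (a, a + L)| / L`.

For `g` take `E = (0, T)`: its `T`-norm is `1` and its `S`-norm at most `(T / S)^(1/p) < 1`.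

For `f` take the `n + 1` bumps `(j T, j T + ε)`, `j ≤ n = ⌊S / T⌋`, with `ε = S - n T`, which is
positive because `S / T ∉ ℕ`. Translating the bumps onto one period shows that a window of
length `T` meets them in measure at most `ε`, so the `T`-norm is at most `(ε / T)^(1/p)`; the
window `(0, S)` contains all of them, so the `S`-norm is `((n + 1) ε / S)^(1/p)`, which is larger
since `S < (n + 1) T`.
-/

open MeasureTheory ENNReal

/-- `‖h‖_{p,L}`: sup over open intervals of length `L` of `((1/L) ∫_I |h|^p)^(1/p)`. -/
noncomputable def intNorm (p L : ℝ) (h : ℝ → ℝ) : ℝ≥0∞ :=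
  ⨆ a : ℝ, (ENNReal.ofReal (1 / L) * ∫⁻ x in Set.Ioo a (a + L), ENNReal.ofReal (|h x| ^ p)) ^ (1 / p)

open Set

lemma intNorm_indicator_one {p : ℝ} (hp : p ≠ 0) (L : ℝ) {E : Set ℝ} (hE : MeasurableSet E) :
    intNorm p L (E.indicator 1) =
      ⨆ a : ℝ, (ENNReal.ofReal (1 / L) * volume (E ∩ Ioo a (a + L))) ^ (1 / p) := by
  have hpow (x : ℝ) : ENNReal.ofReal (|E.indicator 1 x| ^ p) = E.indicator 1 x := by
    by_cases hx : x ∈ E <;> simp [hx, Real.zero_rpow hp]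
  simp only [intNorm, hpow, lintegral_indicator_one hE, Measure.restrict_apply hE]

lemma intNorm_indicator_one_le {p L m : ℝ} (hp : 0 < p) (hL : 0 ≤ L) {E : Set ℝ}
    (hE : MeasurableSet E) (hwindow : ∀ a, volume (E ∩ Ioo a (a + L)) ≤ ENNReal.ofReal m) :
    intNorm p L (E.indicator 1) ≤ ENNReal.ofReal (m / L) ^ (1 / p) := by
  have hdiv : ENNReal.ofReal (m / L) = ENNReal.ofReal (1 / L) * ENNReal.ofReal m := by
    rw [← ENNReal.ofReal_mul (by positivity), one_div_mul_eq_div]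
  rw [intNorm_indicator_one hp.ne' L hE, hdiv]
  exact iSup_le fun a => ENNReal.rpow_le_rpow (mul_le_mul_right (hwindow a) _) (by positivity)

lemma le_intNorm_indicator_one {p L m a : ℝ} (hp : 0 < p) (hL : 0 ≤ L) {E : Set ℝ}
    (hE : MeasurableSet E) (hsub : E ⊆ Ioo a (a + L)) (hvol : volume E = ENNReal.ofReal m) :
    ENNReal.ofReal (m / L) ^ (1 / p) ≤ intNorm p L (E.indicator 1) := by
  rw [intNorm_indicator_one hp.ne' L hE, ← one_div_mul_eq_div, ENNReal.ofReal_mul (by positivity),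
    ← hvol]
  refine le_iSup_of_le a ?_
  rw [inter_eq_self_of_subset_left hsub]

lemma pairwiseDisjoint_Ioo_of_le_abs_sub {ι : Type*} {s : Set ι} {x : ι → ℝ} {ε : ℝ}
    (hsep : ∀ i ∈ s, ∀ j ∈ s, i ≠ j → ε ≤ |x i - x j|) :
    s.PairwiseDisjoint fun i => Ioo (x i) (x i + ε) := by
  intro i hi j hj hij
  refine disjoint_left.2 fun t hti htj => ?_
  have := hsep i hi j hj hij
  rw [le_abs'] at this
  rcases this with h | h <;> linarith [hti.1, hti.2, htj.1, htj.2]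

lemma le_abs_natCast_mul_sub {T : ℝ} (hT : 0 ≤ T) {i j : ℕ} (hij : i ≠ j) :
    T ≤ |i * T - j * T| := by
  have hone : (1 : ℝ) ≤ |(i : ℝ) - j| := by
    exact_mod_cast Int.one_le_abs (sub_ne_zero.2 (Int.natCast_inj.not.2 hij))
  rw [← sub_mul, abs_mul, abs_of_nonneg hT]
  nlinarith

def bumps (T ε : ℝ) (n : ℕ) : Set ℝ := ⋃ j ∈ Finset.range n, Ioo (j * T) (j * T + ε)

lemma measurableSet_bumps (T ε : ℝ) (n : ℕ) : MeasurableSet (bumps T ε n) :=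
  Finset.measurableSet_biUnion _ fun _ _ => measurableSet_Ioo

lemma volume_bumps {T ε : ℝ} (hT : 0 ≤ T) (hεT : ε ≤ T) (n : ℕ) :
    volume (bumps T ε n) = ENNReal.ofReal (n * ε) := by
  have hdisj := pairwiseDisjoint_Ioo_of_le_abs_sub (s := ↑(Finset.range n)) (ε := ε)
    (x := fun j : ℕ => j * T) fun i _ j _ hij => hεT.trans (le_abs_natCast_mul_sub hT hij)
  rw [bumps, measure_biUnion_finset hdisj fun _ _ => measurableSet_Ioo]
  simp [Real.volume_Ioo, ENNReal.ofReal_mul]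

lemma bumps_subset_Ioo {T ε : ℝ} (hT : 0 ≤ T) (n : ℕ) :
    bumps T ε (n + 1) ⊆ Ioo 0 (n * T + ε) := by
  refine iUnion₂_subset fun j hj => Ioo_subset_Ioo (by positivity) ?_
  have : (j : ℝ) ≤ n := by exact_mod_cast Nat.lt_succ_iff.1 (Finset.mem_range.1 hj)
  nlinarith

/-- Translating the `j`-th bump back onto `Ioo 0 ε` moves the window `Ioo a (a + T)` to
`Ioo (a - j * T) (a - j * T + T)`, and these translated windows are pairwise disjoint. -/
lemma volume_bumps_inter_Ioo_le {T : ℝ} (hT : 0 ≤ T) (ε : ℝ) (n : ℕ) (a : ℝ) :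
    volume (bumps T ε n ∩ Ioo a (a + T)) ≤ ENNReal.ofReal ε := by
  have htranslate (j : ℕ) : volume (Ioo (j * T) (j * T + ε) ∩ Ioo a (a + T)) =
      volume (Ioo 0 ε ∩ Ioo (a - j * T) (a - j * T + T)) := by
    rw [← measure_preimage_add_right volume (j * T)]
    congr 1
    ext x
    simp only [mem_preimage, mem_inter_iff, mem_Ioo]
    constructor <;> rintro ⟨⟨_, _⟩, _, _⟩ <;> refine ⟨⟨?_, ?_⟩, ?_, ?_⟩ <;> linarith
  have hdisj := pairwiseDisjoint_Ioo_of_le_abs_sub (s := ↑(Finset.range n)) (ε := T)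
    (x := fun j : ℕ => a - j * T) fun i _ j _ hij => by
      simpa [abs_sub_comm] using le_abs_natCast_mul_sub hT hij
  calc volume (bumps T ε n ∩ Ioo a (a + T))
      ≤ ∑ j ∈ Finset.range n, volume (Ioo (j * T) (j * T + ε) ∩ Ioo a (a + T)) := by
        rw [bumps, iUnion₂_inter]; exact measure_biUnion_finset_le _ _
    _ = volume (⋃ j ∈ Finset.range n, Ioo 0 ε ∩ Ioo (a - j * T) (a - j * T + T)) := by
        rw [measure_biUnion_finset (hdisj.mono fun j => inter_subset_right)
          fun _ _ => measurableSet_Ioo.inter measurableSet_Ioo]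
        exact Finset.sum_congr rfl fun j _ => htranslate j
    _ ≤ volume (Ioo 0 ε) := measure_mono (iUnion₂_subset fun _ _ => inter_subset_left)
    _ = ENNReal.ofReal ε := by rw [Real.volume_Ioo, sub_zero]

lemma exists_intNorm_lt_intNorm_of_div_ne_natCast {p T S : ℝ} (hp : 0 < p) (hT : 0 < T)
    (hS : 0 < S) (hfac : ¬ ∃ k : ℕ, S / T = k) :
    ∃ f : ℝ → ℝ, Measurable f ∧ intNorm p S f < ⊤ ∧ intNorm p T f < intNorm p S f := by
  set n := ⌊S / T⌋₊
  have hnS : n * T < S := by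
    have hle : (n : ℝ) ≤ S / T := Nat.floor_le (div_nonneg hS.le hT.le)
    have hne : (n : ℝ) ≠ S / T := fun h => hfac ⟨n, h.symm⟩
    exact (lt_div_iff₀ hT).1 (hle.lt_of_ne hne)
  have hSn : S < (n + 1) * T := (div_lt_iff₀ hT).1 (Nat.lt_floor_add_one _)
  set ε := S - n * T
  have hε : 0 < ε := sub_pos.2 hnS
  have hvol : volume (bumps T ε (n + 1)) = ENNReal.ofReal ((n + 1) * ε) := by
    simpa using volume_bumps hT.le (by linarith) (n + 1)
  have hE := measurableSet_bumps T ε (n + 1)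
  have hupper : intNorm p S ((bumps T ε (n + 1)).indicator 1) ≤
      ENNReal.ofReal ((n + 1) * ε / S) ^ (1 / p) :=
    intNorm_indicator_one_le hp hS.le hE fun _ => (measure_mono inter_subset_left).trans hvol.le
  have hlower : ENNReal.ofReal ((n + 1) * ε / S) ^ (1 / p) ≤
      intNorm p S ((bumps T ε (n + 1)).indicator 1) :=
    le_intNorm_indicator_one hp hS.le hE (a := 0)
      (by simpa [ε] using bumps_subset_Ioo (ε := ε) hT.le n) hvol
  have hratio : ε / T < (n + 1) * ε / S := by
    rw [div_lt_div_iff₀ hT hS]; nlinarith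
  refine ⟨_, measurable_one.indicator hE,
    hupper.trans_lt (ENNReal.rpow_lt_top_of_nonneg (by positivity) ENNReal.ofReal_ne_top), ?_⟩
  calc intNorm p T ((bumps T ε (n + 1)).indicator 1)
      ≤ ENNReal.ofReal (ε / T) ^ (1 / p) :=
        intNorm_indicator_one_le hp hT.le hE (volume_bumps_inter_Ioo_le hT.le ε (n + 1))
    _ < ENNReal.ofReal ((n + 1) * ε / S) ^ (1 / p) :=
        ENNReal.rpow_lt_rpow ((ENNReal.ofReal_lt_ofReal_iff (by positivity)).2 hratio)
          (by positivity)
    _ ≤ _ := hlower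

lemma exists_intNorm_lt_intNorm_of_lt {p T S : ℝ} (hp : 0 < p) (hT : 0 < T) (hTS : T < S) :
    ∃ g : ℝ → ℝ, Measurable g ∧ intNorm p T g < ⊤ ∧ intNorm p S g < intNorm p T g := by
  have hG : MeasurableSet (Ioo 0 T) := measurableSet_Ioo
  have hvol : volume (Ioo 0 T) = ENNReal.ofReal T := by rw [Real.volume_Ioo, sub_zero]
  have hwindow (L a : ℝ) : volume (Ioo 0 T ∩ Ioo a (a + L)) ≤ ENNReal.ofReal T :=
    (measure_mono inter_subset_left).trans hvol.le
  refine ⟨_, measurable_one.indicator hG,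
    (intNorm_indicator_one_le hp hT.le hG (hwindow T)).trans_lt
      (ENNReal.rpow_lt_top_of_nonneg (by positivity) ENNReal.ofReal_ne_top), ?_⟩
  calc intNorm p S ((Ioo 0 T).indicator 1)
      ≤ ENNReal.ofReal (T / S) ^ (1 / p) :=
        intNorm_indicator_one_le hp (hT.trans hTS).le hG (hwindow S)
    _ < ENNReal.ofReal (T / T) ^ (1 / p) := by
        refine ENNReal.rpow_lt_rpow ((ENNReal.ofReal_lt_ofReal_iff (by positivity)).2 ?_)
          (by positivity)
        rw [div_self hT.ne']; exact (div_lt_one (hT.trans hTS)).2 hTS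
    _ ≤ _ := le_intNorm_indicator_one hp hT.le hG (by rw [zero_add]) hvol

theorem stmt12 (p : ℝ) (hp : 1 ≤ p) (T S : ℝ) (hT : 0 < T) (hTS : T < S)
    (hfac : ¬ ∃ k : ℕ, S / T = (k : ℝ)) :
    ∃ f g : ℝ → ℝ, Measurable f ∧ Measurable g ∧
      intNorm p T f < ⊤ ∧ intNorm p S f < ⊤ ∧ intNorm p T g < ⊤ ∧ intNorm p S g < ⊤ ∧
      intNorm p T f < intNorm p S f ∧ intNorm p S g < intNorm p T g := by
  have hp0 : 0 < p := zero_lt_one.trans_le hp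
  obtain ⟨f, hf, hfS, hfTS⟩ :=
    exists_intNorm_lt_intNorm_of_div_ne_natCast hp0 hT (hT.trans hTS) hfac
  obtain ⟨g, hg, hgT, hgST⟩ := exists_intNorm_lt_intNorm_of_lt hp0 hT hTS
  exact ⟨f, g, hf, hg, hfTS.trans hfS, hfS, hgT, hgST.trans hgT, hfTS, hgST⟩
end

section
/- Let p ∈ [1,∞) and 0 < T < S. Then for every measurable f : ℝ → ℝ, ‖f‖_{p,S}^p ≤ ((⌊S/T⌋ + 1)·T / S) ‖f‖_{p,T}^p ≤ 2 ‖f‖_{p,T}^p, where ‖f‖_{p,L}^p = sup over open intervals I of length L of (1/L) ∫_I |f|^p. -/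
/-!
An interval of length `S` is covered by `⌊S/T⌋ + 1` consecutive half-open intervals of length `T`,
each of which carries at most `T ‖f‖_{p,T}^p` of the mass of `|f|^p`. Dividing by `S` gives the first
inequality, and `(⌊S/T⌋ + 1) T ≤ S + T ≤ 2S` gives the second.
-/

open MeasureTheory ENNReal

/-- `‖h‖_{p,L}^p`: sup over open intervals of length `L` of `(1/L) ∫_I |h|^p`. -/
noncomputable def intNormP (p L : ℝ) (h : ℝ → ℝ) : ℝ≥0∞ :=
  ⨆ a : ℝ, ENNReal.ofReal (1 / L) * ∫⁻ x in Set.Ioo a (a + L), ENNReal.ofReal (|h x| ^ p)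

open Set

section IntervalMass

variable {μ : Measure ℝ} [NullSingletonClass μ] {g : ℝ → ℝ≥0∞} {T : ℝ} {C : ℝ≥0∞}

theorem setLIntegral_Ico_add_nsmul_le (hT : 0 ≤ T)
    (h : ∀ a, ∫⁻ x in Ioo a (a + T), g x ∂μ ≤ C) (n : ℕ) (a : ℝ) :
    ∫⁻ x in Ico a (a + n * T), g x ∂μ ≤ n * C := by
  induction n with
  | zero => simp
  | succ n ih =>
    have hsplit : Ico a (a + (n + 1 : ℕ) * T) =
        Ico a (a + n * T) ∪ Ico (a + n * T) (a + n * T + T) := by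
      rw [Ico_union_Ico_eq_Ico (by nlinarith [n.cast_nonneg (α := ℝ)]) (by linarith)]
      push_cast; ring_nf
    have hlast : ∫⁻ x in Ico (a + n * T) (a + n * T + T), g x ∂μ ≤ C :=
      (setLIntegral_congr Ioo_ae_eq_Ico).symm.trans_le (h _)
    calc ∫⁻ x in Ico a (a + (n + 1 : ℕ) * T), g x ∂μ
        ≤ (∫⁻ x in Ico a (a + n * T), g x ∂μ) +
            ∫⁻ x in Ico (a + n * T) (a + n * T + T), g x ∂μ := by
          rw [hsplit]; exact lintegral_union_le _ _ _
      _ ≤ n * C + C := add_le_add ih hlast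
      _ = (n + 1 : ℕ) * C := by push_cast; ring

theorem setLIntegral_Ioo_le_of_le_nsmul (hT : 0 ≤ T)
    (h : ∀ a, ∫⁻ x in Ioo a (a + T), g x ∂μ ≤ C) {S : ℝ} {n : ℕ} (hS : S ≤ n * T) (a : ℝ) :
    ∫⁻ x in Ioo a (a + S), g x ∂μ ≤ n * C :=
  (lintegral_mono_set (Ioo_subset_Ico_self.trans (Ico_subset_Ico_right (by linarith)))).trans
    (setLIntegral_Ico_add_nsmul_le hT h n a)

end IntervalMass

theorem setLIntegral_Ioo_le_intNormP (p : ℝ) {T : ℝ} (hT : 0 < T) (f : ℝ → ℝ) (a : ℝ) :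
    ∫⁻ x in Ioo a (a + T), ENNReal.ofReal (|f x| ^ p) ≤ ENNReal.ofReal T * intNormP p T f := by
  have hmean : ENNReal.ofReal (1 / T) * ∫⁻ x in Ioo a (a + T), ENNReal.ofReal (|f x| ^ p)
      ≤ intNormP p T f :=
    le_iSup (fun a ↦ ENNReal.ofReal (1 / T) * ∫⁻ x in Ioo a (a + T), ENNReal.ofReal (|f x| ^ p)) a
  calc ∫⁻ x in Ioo a (a + T), ENNReal.ofReal (|f x| ^ p)
      = ENNReal.ofReal T * (ENNReal.ofReal (1 / T) *
          ∫⁻ x in Ioo a (a + T), ENNReal.ofReal (|f x| ^ p)) := by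
        rw [← mul_assoc, ← ENNReal.ofReal_mul hT.le, mul_one_div_cancel hT.ne', ENNReal.ofReal_one,
          one_mul]
    _ ≤ ENNReal.ofReal T * intNormP p T f := by gcongr

theorem intNormP_le_of_le_nsmul (p : ℝ) {T S : ℝ} (hT : 0 < T) {n : ℕ} (hS : S ≤ n * T)
    (f : ℝ → ℝ) :
    intNormP p S f ≤ ENNReal.ofReal (n * T / S) * intNormP p T f := by
  refine iSup_le fun a ↦ ?_
  calc ENNReal.ofReal (1 / S) * ∫⁻ x in Ioo a (a + S), ENNReal.ofReal (|f x| ^ p)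
      ≤ ENNReal.ofReal (1 / S) * (n * (ENNReal.ofReal T * intNormP p T f)) := by
        gcongr
        exact setLIntegral_Ioo_le_of_le_nsmul hT.le (setLIntegral_Ioo_le_intNormP p hT f) hS a
    _ = ENNReal.ofReal (1 / S * (n * T)) * intNormP p T f := by
        rw [ENNReal.ofReal_mul' (by positivity), ENNReal.ofReal_mul (by positivity),
          ENNReal.ofReal_natCast]
        ring
    _ = ENNReal.ofReal (n * T / S) * intNormP p T f := by rw [one_div_mul_eq_div]

theorem le_floor_div_add_one_mul {T S : ℝ} (hT : 0 < T) : S ≤ ((⌊S / T⌋ : ℝ) + 1) * T :=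
  (div_le_iff₀ hT).mp (Int.lt_floor_add_one _).le

theorem floor_div_add_one_mul_div_le_two {T S : ℝ} (hT : 0 < T) (hTS : T ≤ S) :
    ((⌊S / T⌋ : ℝ) + 1) * T / S ≤ 2 := by
  have hfloor : (⌊S / T⌋ : ℝ) * T ≤ S := (le_div_iff₀ hT).mp (Int.floor_le _)
  rw [div_le_iff₀ (hT.trans_le hTS)]
  linarith

theorem stmt13_general (p : ℝ) (T S : ℝ) (hT : 0 < T) (hTS : T < S)
    (f : ℝ → ℝ) :
    intNormP p S f ≤ ENNReal.ofReal (((⌊S / T⌋ : ℝ) + 1) * T / S) * intNormP p T f ∧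
      ENNReal.ofReal (((⌊S / T⌋ : ℝ) + 1) * T / S) * intNormP p T f ≤
        2 * intNormP p T f := by
  have hN : ((⌊S / T⌋₊ + 1 : ℕ) : ℝ) = (⌊S / T⌋ : ℝ) + 1 := by
    rw [Nat.cast_succ, natCast_floor_eq_intCast_floor (div_pos (hT.trans hTS) hT).le]
  constructor
  · have hcover := intNormP_le_of_le_nsmul p hT (hN ▸ le_floor_div_add_one_mul hT) f
    rwa [hN] at hcover
  · calc ENNReal.ofReal (((⌊S / T⌋ : ℝ) + 1) * T / S) * intNormP p T f
        ≤ ENNReal.ofReal 2 * intNormP p T f := by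
          gcongr; exact floor_div_add_one_mul_div_le_two hT hTS.le
      _ = 2 * intNormP p T f := by norm_num

theorem stmt13 (p : ℝ) (hp : 1 ≤ p) (T S : ℝ) (hT : 0 < T) (hTS : T < S)
    (f : ℝ → ℝ) (hf : Measurable f) :
    intNormP p S f ≤ ENNReal.ofReal (((⌊S / T⌋ : ℝ) + 1) * T / S) * intNormP p T f ∧
      ENNReal.ofReal (((⌊S / T⌋ : ℝ) + 1) * T / S) * intNormP p T f ≤
        2 * intNormP p T f :=
  stmt13_general p T S hT hTS f
end

section
/- Let T, S > 0 with T < S and S/T ∉ ℕ, let d = ⌊S/T⌋, and choose ε > 0 with (d+1)ε < S − dT. Let ψ : ℝ → ℝ be measurable, supported in (0, ε), with ∫ |ψ|^p = 1, and set f(x) = ∑_{i=0}^{d} ψ(x − i(T+ε)). Then ‖f‖_{p,T}^p = 1/T and ‖f‖_{p,S}^p = (d+1)/S, and 1/T < (d+1)/S. -/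
/-!
Put `g = |ψ|^p`. The translates `ψ (· - i (T + ε))` have disjoint supports, so `|f|^p` is the sum
of the translates `g (· - i (T + ε))`, and each of them has mass `1`. Consecutive supports are
separated by gaps of length `T`, so a window of length `T` meets at most one of them and carries
mass at most `1`, attained on `(0, T)` since `ε ≤ T`. The window `(0, S)` contains all `d + 1`
supports because `d (T + ε) + ε < S`. Finally `d = ⌊S / T⌋₊` gives `S < (d + 1) T`.
-/

open MeasureTheory ENNReal

open Set Function

theorem intNormP_eq_of_isGreatest {p L : ℝ} {h : ℝ → ℝ} {m : ℝ≥0∞}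
    (hm : IsGreatest (range fun a => ∫⁻ x in Ioo a (a + L), ENNReal.ofReal (|h x| ^ p)) m) :
    intNormP p L h = ENNReal.ofReal (1 / L) * m := by
  rw [intNormP, ← ENNReal.mul_iSup, hm.isLUB.iSup_eq]

section FinsetSum

variable {ι α M N : Type*} [AddCommMonoid M] {s : Finset ι}

theorem Finset.sum_le_of_pairwise_eq_zero [Preorder M] {a : ι → M} {b : M} (hb : 0 ≤ b)
    (ha : (s : Set ι).Pairwise fun i j => a i = 0 ∨ a j = 0) (hle : ∀ i ∈ s, a i ≤ b) :
    ∑ i ∈ s, a i ≤ b := by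
  by_cases hex : ∃ i ∈ s, a i ≠ 0
  · obtain ⟨i, hi, hai⟩ := hex
    rw [Finset.sum_eq_single_of_mem i hi fun j hj hji => (ha hj hi hji).resolve_right hai]
    exact hle i hi
  · push Not at hex
    rwa [Finset.sum_eq_zero hex]

theorem Finset.apply_sum_of_pairwiseDisjoint_support [AddCommMonoid N] {φ : ι → α → M}
    (hφ : (s : Set ι).PairwiseDisjoint fun i => support (φ i)) {F : M → N} (hF : F 0 = 0)
    (x : α) : F (∑ i ∈ s, φ i x) = ∑ i ∈ s, F (φ i x) := by
  by_cases hex : ∃ i ∈ s, φ i x ≠ 0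
  · obtain ⟨i, hi, hx⟩ := hex
    have hzero : ∀ j ∈ s, j ≠ i → φ j x = 0 := fun j hj hji =>
      notMem_support.1 fun hxj : x ∈ support (φ j) =>
        Set.disjoint_left.1 (hφ hj hi hji) hxj (mem_support.2 hx)
    rw [Finset.sum_eq_single_of_mem i hi hzero,
      Finset.sum_eq_single_of_mem i hi fun j hj hji => by rw [hzero j hj hji, hF]]
  · push Not at hex
    rw [Finset.sum_eq_zero hex, hF, Finset.sum_eq_zero fun i hi => by rw [hex i hi, hF]]

end FinsetSum

theorem support_ofReal_abs_rpow {α : Type*} (h : α → ℝ) {p : ℝ} (hp : p ≠ 0) :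
    support (fun x => ENNReal.ofReal (|h x| ^ p)) = support h := by
  ext x
  simp only [mem_support, ne_eq, ENNReal.ofReal_eq_zero, not_le]
  constructor
  · intro hpos hx
    simp [hx, Real.zero_rpow hp] at hpos
  · intro hx
    exact Real.rpow_pos_of_pos (abs_pos.2 hx) p

section Translate

variable {g : ℝ → ℝ≥0∞} {K A : Set ℝ} {c : ℝ}

theorem setLIntegral_comp_sub_eq_zero (hg : support g ⊆ K) (hA : MeasurableSet A)
    (hAK : Disjoint A ((· - c) ⁻¹' K)) : ∫⁻ x in A, g (x - c) = 0 := by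
  rw [setLIntegral_congr_fun hA fun x hx => notMem_support.1 fun hgx =>
    Set.disjoint_left.1 hAK hx (hg hgx)]
  exact lintegral_zero

theorem setLIntegral_comp_sub_eq_lintegral (hg : support g ⊆ K) (hA : (· - c) ⁻¹' K ⊆ A) :
    ∫⁻ x in A, g (x - c) = ∫⁻ x, g x := by
  rw [setLIntegral_eq_of_support_subset fun x hx => hA (hg hx), lintegral_sub_right_eq_self]

theorem setLIntegral_comp_sub_le_lintegral : ∫⁻ x in A, g (x - c) ≤ ∫⁻ x, g x :=
  (setLIntegral_le_lintegral _ _).trans_eq (lintegral_sub_right_eq_self g c)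

end Translate

section NatMulTranslates

variable {ε τ : ℝ}

theorem pairwiseDisjoint_Ioo_natCast_mul (hετ : ε ≤ τ) (s : Set ℕ) :
    s.PairwiseDisjoint fun i : ℕ => Ioo (i * τ) (i * τ + ε) := by
  suffices key : ∀ i j : ℕ, i < j →
      Disjoint (Ioo (i * τ) (i * τ + ε)) (Ioo (j * τ) (j * τ + ε)) by
    intro i _ j _ hij
    rcases hij.lt_or_gt with h | h
    exacts [key i j h, (key j i h).symm]
  intro i j hij
  have hij' : (i : ℝ) + 1 ≤ j := by exact_mod_cast hij
  refine Set.disjoint_left.2 fun x hxi hxj => ?_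
  simp only [mem_Ioo] at hxi hxj
  nlinarith

theorem disjoint_Ioo_or_disjoint_Ioo_natCast_mul {L : ℝ} (hLτ : L + ε ≤ τ) (a : ℝ) {i j : ℕ}
    (hij : i ≠ j) :
    Disjoint (Ioo a (a + L)) (Ioo (i * τ) (i * τ + ε)) ∨
      Disjoint (Ioo a (a + L)) (Ioo (j * τ) (j * τ + ε)) := by
  suffices key : ∀ i j : ℕ, i < j → Disjoint (Ioo a (a + L)) (Ioo (i * τ) (i * τ + ε)) ∨
      Disjoint (Ioo a (a + L)) (Ioo (j * τ) (j * τ + ε)) by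
    rcases hij.lt_or_gt with h | h
    exacts [key i j h, (key j i h).symm]
  intro i j hij
  have hij' : (i : ℝ) + 1 ≤ j := by exact_mod_cast hij
  by_contra! h
  obtain ⟨⟨x, hxa, hxi⟩, ⟨y, hya, hyj⟩⟩ := And.imp not_disjoint_iff.1 not_disjoint_iff.1 h
  simp only [mem_Ioo] at hxa hxi hya hyj
  nlinarith

variable {p : ℝ} {ψ : ℝ → ℝ} {g : ℝ → ℝ≥0∞}

theorem setLIntegral_ofReal_abs_rpow_sum_translates (hp : p ≠ 0) (hψ : Measurable ψ)
    (hsupp : support ψ ⊆ Ioo 0 ε) (hετ : ε ≤ τ) (s : Finset ℕ) (A : Set ℝ) :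
    ∫⁻ x in A, ENNReal.ofReal (|∑ i ∈ s, ψ (x - i * τ)| ^ p) =
      ∑ i ∈ s, ∫⁻ x in A, ENNReal.ofReal (|ψ (x - i * τ)| ^ p) := by
  have hdisj : (s : Set ℕ).PairwiseDisjoint fun i : ℕ => support fun x => ψ (x - i * τ) := by
    refine (pairwiseDisjoint_Ioo_natCast_mul hετ _).mono fun i x hx => ?_
    have := hsupp hx
    simp only [mem_Ioo] at this ⊢
    constructor <;> linarith
  simp_rw [Finset.apply_sum_of_pairwiseDisjoint_support hdisj
    (F := fun t => ENNReal.ofReal (|t| ^ p)) (by simp [Real.zero_rpow hp])]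
  exact lintegral_finsetSum _ fun i _ =>
    ((hψ.comp (measurable_id.sub_const _)).abs.pow_const p).ennreal_ofReal

theorem isGreatest_sum_setLIntegral_short_windows (hg : support g ⊆ Ioo 0 ε) {L : ℝ}
    (hεL : ε ≤ L) (hLτ : L + ε ≤ τ) {s : Finset ℕ} (hs : 0 ∈ s) :
    IsGreatest (range fun a => ∑ i ∈ s, ∫⁻ x in Ioo a (a + L), g (x - i * τ))
      (∫⁻ x, g x) := by
  have hle : ∀ a, ∑ i ∈ s, ∫⁻ x in Ioo a (a + L), g (x - i * τ) ≤ ∫⁻ x, g x := by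
    intro a
    refine Finset.sum_le_of_pairwise_eq_zero zero_le (fun i _ j _ hij => ?_)
      fun i _ => setLIntegral_comp_sub_le_lintegral
    refine (disjoint_Ioo_or_disjoint_Ioo_natCast_mul hLτ a hij).imp ?_ ?_ <;>
    · intro h
      refine setLIntegral_comp_sub_eq_zero hg measurableSet_Ioo ?_
      simpa [preimage_sub_const_Ioo, add_comm] using h
  refine ⟨⟨0, (hle 0).antisymm ?_⟩, forall_mem_range.2 hle⟩
  calc ∫⁻ x, g x = ∫⁻ x in Ioo 0 (0 + L), g (x - (0 : ℕ) * τ) := by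
        refine (setLIntegral_comp_sub_eq_lintegral hg ?_).symm
        simp only [preimage_sub_const_Ioo, Nat.cast_zero, zero_mul, add_zero, zero_add]
        exact Ioo_subset_Ioo_right hεL
    _ ≤ _ := Finset.single_le_sum (f := fun i : ℕ => ∫⁻ x in Ioo 0 (0 + L), g (x - i * τ))
        (fun _ _ => zero_le) hs

theorem isGreatest_sum_setLIntegral_long_windows (hg : support g ⊆ Ioo 0 ε) (hτ : 0 ≤ τ)
    {L : ℝ} {n : ℕ} (hL : n * τ + ε ≤ L) :
    IsGreatest
      (range fun a => ∑ i ∈ Finset.range (n + 1), ∫⁻ x in Ioo a (a + L), g (x - i * τ))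
      ((n + 1) * ∫⁻ x, g x) := by
  have hcard : ∑ _i ∈ Finset.range (n + 1), ∫⁻ x, g x = (n + 1) * ∫⁻ x, g x := by
    simp
  refine ⟨⟨0, ?_⟩, forall_mem_range.2 fun a => ?_⟩
  · rw [← hcard]
    refine Finset.sum_congr rfl fun i hi => setLIntegral_comp_sub_eq_lintegral hg ?_
    have hin : (i : ℝ) ≤ n := by exact_mod_cast Finset.mem_range_succ_iff.1 hi
    rw [preimage_sub_const_Ioo, zero_add]
    exact Ioo_subset_Ioo (by positivity) (by nlinarith)
  · exact hcard ▸ Finset.sum_le_sum fun i _ => setLIntegral_comp_sub_le_lintegral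

end NatMulTranslates

theorem stmt14_general (p : ℝ) (hp : 1 ≤ p) (T S : ℝ) (hT : 0 < T)
    (d : ℕ) (hd : d = ⌊S / T⌋₊)
    (ε : ℝ) (hε : 0 < ε) (hεsmall : ((d : ℝ) + 1) * ε < S - (d : ℝ) * T)
    (ψ : ℝ → ℝ) (hψ : Measurable ψ) (hsupp : Function.support ψ ⊆ Set.Ioo 0 ε)
    (hmass : ∫⁻ x, ENNReal.ofReal (|ψ x| ^ p) = 1)
    (f : ℝ → ℝ) (hfdef : ∀ x, f x = ∑ i ∈ Finset.range (d + 1), ψ (x - (i : ℝ) * (T + ε))) :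
    intNormP p T f = ENNReal.ofReal (1 / T) ∧
      intNormP p S f = ENNReal.ofReal (((d : ℝ) + 1) / S) ∧
      1 / T < ((d : ℝ) + 1) / S := by
  have hp0 : p ≠ 0 := by linarith
  have hS : 0 < S := by nlinarith
  have hSd : S < (d + 1) * T := by
    have := Nat.lt_floor_add_one (S / T)
    rwa [← hd, div_lt_iff₀ hT] at this
  have hεT : ε ≤ T := by nlinarith
  have hg : support (fun y => ENNReal.ofReal (|ψ y| ^ p)) ⊆ Ioo 0 ε :=
    (support_ofReal_abs_rpow ψ hp0).subset.trans hsupp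
  have hwindows : ∀ L, (fun a => ∫⁻ x in Ioo a (a + L), ENNReal.ofReal (|f x| ^ p)) =
      fun a => ∑ i ∈ Finset.range (d + 1),
        ∫⁻ x in Ioo a (a + L), ENNReal.ofReal (|ψ (x - i * (T + ε))| ^ p) := fun L =>
    funext fun a => by
      simp_rw [hfdef]
      exact setLIntegral_ofReal_abs_rpow_sum_translates hp0 hψ hsupp (by linarith) _ _
  refine ⟨?_, ?_, ?_⟩
  · have hT' := isGreatest_sum_setLIntegral_short_windows hg hεT le_rfl
      (Finset.mem_range.2 d.succ_pos)
    rw [intNormP_eq_of_isGreatest (hwindows T ▸ hT'), hmass, mul_one]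
  · have hS' := isGreatest_sum_setLIntegral_long_windows hg (τ := T + ε) (L := S) (n := d)
      (by positivity) (by linarith)
    rw [intNormP_eq_of_isGreatest (hwindows S ▸ hS'), hmass, mul_one,
      div_eq_mul_one_div ((d : ℝ) + 1), mul_comm ((d : ℝ) + 1), ENNReal.ofReal_mul (by positivity)]
    norm_cast
  · rw [div_lt_div_iff₀ hT hS]
    linarith

theorem stmt14 (p : ℝ) (hp : 1 ≤ p) (T S : ℝ) (hT : 0 < T) (hTS : T < S)
    (hfac : ¬ ∃ k : ℕ, S / T = (k : ℝ)) (d : ℕ) (hd : d = ⌊S / T⌋₊)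
    (ε : ℝ) (hε : 0 < ε) (hεsmall : ((d : ℝ) + 1) * ε < S - (d : ℝ) * T)
    (ψ : ℝ → ℝ) (hψ : Measurable ψ) (hsupp : Function.support ψ ⊆ Set.Ioo 0 ε)
    (hmass : ∫⁻ x, ENNReal.ofReal (|ψ x| ^ p) = 1)
    (f : ℝ → ℝ) (hfdef : ∀ x, f x = ∑ i ∈ Finset.range (d + 1), ψ (x - (i : ℝ) * (T + ε))) :
    intNormP p T f = ENNReal.ofReal (1 / T) ∧
      intNormP p S f = ENNReal.ofReal (((d : ℝ) + 1) / S) ∧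
      1 / T < ((d : ℝ) + 1) / S :=
  stmt14_general p hp T S hT d hd ε hε hεsmall ψ hψ hsupp hmass f hfdef
end
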